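/- arXiv:2210.17163 — 10 statements merged into one kernel-verified Lean document; each statement's English description precedes it below -/
import Mathlib

section
/- If f : ℝⁿ → ℝ is differentiable, γ : [0,T] → ℝⁿ is differentiable with γ'(t) = e(γ(t)) for all t ∈ [0,T], the Lie derivative of f along e vanishes on all points satisfying P (i.e., for all x with P x, ⟨∇f(x), e(x)⟩ = 0), γ(t) satisfies P for all t ∈ [0,T], and f(γ(0)) = 0, then f(γ(t)) = 0 for all t ∈ [0,T]. -/
open InnerProductSpace

/-- Soundness of the differential invariant rule (dI₌) for equalities. -/
theorem dI_eq {n : ℕ} (e : EuclideanSpace ℝ (Fin n) → EuclideanSpace ℝ (Fin n))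
    (f : EuclideanSpace ℝ (Fin n) → ℝ) (P : EuclideanSpace ℝ (Fin n) → Prop)
    (γ : ℝ → EuclideanSpace ℝ (Fin n)) (T : ℝ) (hT : 0 ≤ T)
    (hf : Differentiable ℝ f)
    (hγ : ∀ t ∈ Set.Icc (0:ℝ) T, HasDerivAt γ (e (γ t)) t)
    (hlie : ∀ x, P x → ⟪gradient f x, e x⟫_ℝ = 0)
    (hP : ∀ t ∈ Set.Icc (0:ℝ) T, P (γ t))
    (h0 : f (γ 0) = 0) :
    ∀ t ∈ Set.Icc (0:ℝ) T, f (γ t) = 0 := by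
  have key : ∀ t ∈ Set.Icc (0:ℝ) T, HasDerivAt (fun s => f (γ s)) 0 t := by
    intro t ht
    have hg := (hf (γ t)).hasGradientAt
    have hfd := hg.hasFDerivAt
    have := hfd.comp_hasDerivAt t (hγ t ht)
    have heq : (toDual ℝ (EuclideanSpace ℝ (Fin n))) (gradient f (γ t)) (e (γ t))
        = ⟪gradient f (γ t), e (γ t)⟫_ℝ := rfl
    rw [heq, hlie _ (hP t ht)] at this
    exact this
  intro t ht
  have := constant_of_has_deriv_right_zero (f := fun s => f (γ s)) (a := 0) (b := T)
    (fun s hs => ((key s hs).continuousAt).continuousWithinAt)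
    (fun s hs => ((key s (Set.mem_Icc_of_Ico hs)).hasDerivWithinAt))
  simpa [h0] using this t ht
end

section
/- If f : ℝⁿ → ℝ is differentiable, γ : [0,T] → ℝⁿ is differentiable with γ'(t) = e(γ(t)), the Lie derivative of f along e is nonnegative at all points satisfying P, γ(t) satisfies P for all t ∈ [0,T], and f(γ(0)) ≥ 0, then f(γ(t)) ≥ 0 for all t ∈ [0,T]. -/
open InnerProductSpace

/-- Soundness of the differential invariant rule (dI≽) for non-strict inequalities. -/
theorem dI_ge {n : ℕ} (e : EuclideanSpace ℝ (Fin n) → EuclideanSpace ℝ (Fin n))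
    (f : EuclideanSpace ℝ (Fin n) → ℝ) (P : EuclideanSpace ℝ (Fin n) → Prop)
    (γ : ℝ → EuclideanSpace ℝ (Fin n)) (T : ℝ) (hT : 0 ≤ T)
    (hf : Differentiable ℝ f)
    (hγ : ∀ t ∈ Set.Icc (0:ℝ) T, HasDerivAt γ (e (γ t)) t)
    (hlie : ∀ x, P x → ⟪gradient f x, e x⟫_ℝ ≥ 0)
    (hP : ∀ t ∈ Set.Icc (0:ℝ) T, P (γ t))
    (h0 : f (γ 0) ≥ 0) :
    ∀ t ∈ Set.Icc (0:ℝ) T, f (γ t) ≥ 0 := by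
  have hderiv : ∀ t ∈ Set.Icc (0:ℝ) T,
      HasDerivAt (fun s => f (γ s)) ⟪gradient f (γ t), e (γ t)⟫_ℝ t := by
    intro t ht
    have h1 := (hf (γ t)).hasFDerivAt.comp_hasDerivAt t (hγ t ht)
    have h2 : (fderiv ℝ f (γ t)) (e (γ t)) = ⟪gradient f (γ t), e (γ t)⟫_ℝ := by
      rw [gradient, InnerProductSpace.toDual_symm_apply]
    rwa [h2] at h1
  have hmono : MonotoneOn (fun s => f (γ s)) (Set.Icc 0 T) := by
    apply monotoneOn_of_hasDerivWithinAt_nonneg (convex_Icc 0 T)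
      (f' := fun t => ⟪gradient f (γ t), e (γ t)⟫_ℝ)
    · exact fun t ht => ((hderiv t ht).continuousAt).continuousWithinAt
    · intro t ht
      exact ((hderiv t (interior_subset ht)).hasDerivWithinAt)
    · intro t ht
      exact hlie _ (hP t (interior_subset ht))
  intro t ht
  exact le_trans h0 (hmono (Set.left_mem_Icc.2 hT) ht ht.1)
end

section
/- If f : ℝⁿ → ℝ is differentiable, γ : [0,T] → ℝⁿ is differentiable with γ'(t) = e(γ(t)), the Lie derivative of f along e vanishes at all points satisfying P, γ(t) satisfies P for all t ∈ [0,T], and f(γ(0)) ≠ 0, then f(γ(t)) ≠ 0 for all t ∈ [0,T]. -/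
open InnerProductSpace Set

section
variable {E : Type*} [NormedAddCommGroup E] [InnerProductSpace ℝ E] [CompleteSpace E]

theorem HasGradientAt.comp_hasDerivAt {f : E → ℝ} {f' v : E} {γ : ℝ → E} {t : ℝ}
    (hf : HasGradientAt f f' (γ t)) (hγ : HasDerivAt γ v t) :
    HasDerivAt (f ∘ γ) ⟪f', v⟫_ℝ t := by
  simpa only [toDual_apply_apply] using hf.hasFDerivAt.comp_hasDerivAt t hγ

theorem hasDerivAt_comp_eq_zero_of_inner_gradient_eq_zero {e : E → E} {f : E → ℝ}
    {γ : ℝ → E} {t : ℝ} (hf : DifferentiableAt ℝ f (γ t)) (hγ : HasDerivAt γ (e (γ t)) t)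
    (hlie : ⟪gradient f (γ t), e (γ t)⟫_ℝ = 0) :
    HasDerivAt (f ∘ γ) 0 t :=
  hlie ▸ hf.hasGradientAt.comp_hasDerivAt hγ

theorem eq_of_inner_gradient_eq_zero_on_Icc {e : E → E} {f : E → ℝ} {P : E → Prop}
    {γ : ℝ → E} {a b : ℝ} (hf : Differentiable ℝ f)
    (hγ : ∀ t ∈ Icc a b, HasDerivAt γ (e (γ t)) t)
    (hlie : ∀ x, P x → ⟪gradient f x, e x⟫_ℝ = 0) (hP : ∀ t ∈ Icc a b, P (γ t)) :
    ∀ t ∈ Icc a b, f (γ t) = f (γ a) := by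
  have hderiv : ∀ t ∈ Icc a b, HasDerivAt (f ∘ γ) 0 t := fun t ht =>
    hasDerivAt_comp_eq_zero_of_inner_gradient_eq_zero (hf _) (hγ t ht) (hlie _ (hP t ht))
  exact constant_of_has_deriv_right_zero
    (fun t ht => (hderiv t ht).continuousAt.continuousWithinAt)
    (fun t ht => (hderiv t (Ico_subset_Icc_self ht)).hasDerivWithinAt)

end

theorem dI_ne_general {n : ℕ} (e : EuclideanSpace ℝ (Fin n) → EuclideanSpace ℝ (Fin n))
    (f : EuclideanSpace ℝ (Fin n) → ℝ) (P : EuclideanSpace ℝ (Fin n) → Prop)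
    (γ : ℝ → EuclideanSpace ℝ (Fin n)) (T : ℝ)
    (hf : Differentiable ℝ f)
    (hγ : ∀ t ∈ Set.Icc (0:ℝ) T, HasDerivAt γ (e (γ t)) t)
    (hlie : ∀ x, P x → ⟪gradient f x, e x⟫_ℝ = 0)
    (hP : ∀ t ∈ Set.Icc (0:ℝ) T, P (γ t))
    (h0 : f (γ 0) ≠ 0) :
    ∀ t ∈ Set.Icc (0:ℝ) T, f (γ t) ≠ 0 := fun t ht =>
  eq_of_inner_gradient_eq_zero_on_Icc hf hγ hlie hP t ht ▸ h0

/-- Soundness of the differential invariant rule (dI≠) for disequalities. -/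
theorem dI_ne {n : ℕ} (e : EuclideanSpace ℝ (Fin n) → EuclideanSpace ℝ (Fin n))
    (f : EuclideanSpace ℝ (Fin n) → ℝ) (P : EuclideanSpace ℝ (Fin n) → Prop)
    (γ : ℝ → EuclideanSpace ℝ (Fin n)) (T : ℝ) (hT : 0 ≤ T)
    (hf : Differentiable ℝ f)
    (hγ : ∀ t ∈ Set.Icc (0:ℝ) T, HasDerivAt γ (e (γ t)) t)
    (hlie : ∀ x, P x → ⟪gradient f x, e x⟫_ℝ = 0)
    (hP : ∀ t ∈ Set.Icc (0:ℝ) T, P (γ t))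
    (h0 : f (γ 0) ≠ 0) :
    ∀ t ∈ Set.Icc (0:ℝ) T, f (γ t) ≠ 0 :=
  dI_ne_general e f P γ T hf hγ hlie hP h0
end

section
/- Suppose Q₁ is an invariant of the ODE ẋ = e under domain P and Q₂ is an invariant of the same ODE under domain P ∧ Q₁. Then Q₁ ∧ Q₂ is an invariant of the ODE under domain P. -/
/-- `Q` is an invariant of the ODE `ẋ = e` under domain `P`. -/
def ODEInv {n : ℕ} (P : EuclideanSpace ℝ (Fin n) → Prop)
    (e : EuclideanSpace ℝ (Fin n) → EuclideanSpace ℝ (Fin n))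
    (Q : EuclideanSpace ℝ (Fin n) → Prop) : Prop :=
  ∀ (T : ℝ), 0 ≤ T → ∀ γ : ℝ → EuclideanSpace ℝ (Fin n),
    (∀ t ∈ Set.Icc (0:ℝ) T, HasDerivAt γ (e (γ t)) t) →
    (∀ t ∈ Set.Icc (0:ℝ) T, P (γ t)) → Q (γ 0) →
    ∀ t ∈ Set.Icc (0:ℝ) T, Q (γ t)

/-- Soundness of the differential cut rule (dC). -/
theorem dC {n : ℕ} (P Q₁ Q₂ : EuclideanSpace ℝ (Fin n) → Prop)
    (e : EuclideanSpace ℝ (Fin n) → EuclideanSpace ℝ (Fin n))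
    (h1 : ODEInv P e Q₁)
    (h2 : ODEInv (fun x => P x ∧ Q₁ x) e Q₂) :
    ODEInv P e (fun x => Q₁ x ∧ Q₂ x) := by
  intro T hT γ hγ hP hQ t ht
  have hQ1 : ∀ t ∈ Set.Icc (0:ℝ) T, Q₁ (γ t) := h1 T hT γ hγ hP hQ.1
  exact ⟨hQ1 t ht, h2 T hT γ hγ (fun s hs => ⟨hP s hs, hQ1 s hs⟩) hQ.2 t ht⟩
end

section
/- Let f, g : ℝⁿ → ℝ with f differentiable, and suppose for all x satisfying P, the Lie derivative of f along e at x equals g(x)·f(x), with g continuous on the relevant trajectory (equivalently, t ↦ g(γ(t)) is continuous). Then for any differentiable solution γ : [0,T] → ℝⁿ of ẋ = e staying in P with f(γ(0)) = 0, we have f(γ(t)) = 0 for all t ∈ [0,T]. -/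
open InnerProductSpace

/-- Soundness of the Darboux equality rule (dbx₌). -/
theorem dbx_eq {n : ℕ} (e : EuclideanSpace ℝ (Fin n) → EuclideanSpace ℝ (Fin n))
    (f g : EuclideanSpace ℝ (Fin n) → ℝ) (P : EuclideanSpace ℝ (Fin n) → Prop)
    (γ : ℝ → EuclideanSpace ℝ (Fin n)) (T : ℝ) (hT : 0 ≤ T)
    (hf : Differentiable ℝ f)
    (hlie : ∀ x, P x → ⟪gradient f x, e x⟫_ℝ = g x * f x)
    (hg : ContinuousOn (fun t => g (γ t)) (Set.Icc (0:ℝ) T))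
    (hγ : ∀ t ∈ Set.Icc (0:ℝ) T, HasDerivAt γ (e (γ t)) t)
    (hP : ∀ t ∈ Set.Icc (0:ℝ) T, P (γ t))
    (h0 : f (γ 0) = 0) :
    ∀ t ∈ Set.Icc (0:ℝ) T, f (γ t) = 0 := by
  set h : ℝ → ℝ := fun t => f (γ t) with hh
  have hderiv : ∀ t ∈ Set.Icc (0:ℝ) T, HasDerivAt h (g (γ t) * h t) t := by
    intro t ht
    have hgrad := (hf (γ t)).hasGradientAt
    have hD := hgrad.hasFDerivAt.comp_hasDerivAt t (hγ t ht)
    have : (InnerProductSpace.toDual ℝ _ (gradient f (γ t))) (e (γ t))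
        = g (γ t) * h t := by
      rw [InnerProductSpace.toDual_apply_apply]
      exact hlie _ (hP t ht)
    rwa [this] at hD
  obtain ⟨K, hK⟩ := (isCompact_Icc).exists_bound_of_continuousOn hg
  have hcont : ContinuousOn h (Set.Icc (0:ℝ) T) :=
    fun t ht => ((hderiv t ht).continuousAt).continuousWithinAt
  have key := norm_le_gronwallBound_of_norm_deriv_right_le (f := h)
    (f' := fun t => g (γ t) * h t) (δ := 0) (K := K) (ε := 0) (a := 0) (b := T)
    hcont
    (fun t ht => (hderiv t (Set.Ico_subset_Icc_self ht)).hasDerivWithinAt)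
    (by simp [h, h0])
    (fun t ht => by
      have := hK t (Set.Ico_subset_Icc_self ht)
      calc ‖g (γ t) * h t‖ = ‖g (γ t)‖ * ‖h t‖ := norm_mul _ _
        _ ≤ K * ‖h t‖ := by
            exact mul_le_mul_of_nonneg_right this (norm_nonneg _)
        _ ≤ K * ‖h t‖ + 0 := by simp)
  intro t ht
  have := key t ht
  rw [gronwallBound_ε0, zero_mul] at this
  exact norm_le_zero_iff.mp this
end

section
/- Let f : ℝⁿ → ℝ and γ : [0,T] → ℝⁿ a differentiable solution of ẋ = e with f ∘ γ differentiable. Suppose for all x satisfying P with f(x) = 0, the Lie derivative of f along e at x is strictly positive. If γ(t) satisfies P for all t ∈ [0,T] and f(γ(0)) ≥ 0, then f(γ(t)) ≥ 0 for all t ∈ [0,T]. -/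
/-! By the chain rule `f ∘ γ` has derivative `⟪∇f (γ t), e (γ t)⟫`, which is positive wherever
`f ∘ γ` vanishes, so `f ∘ γ` cannot cross zero downwards. The latter is the ODE comparison
(fencing) theorem `image_le_of_deriv_right_lt_deriv_boundary` applied to `-(f ∘ γ)` against the
barrier `0`, whose proof is the supremum-of-the-first-crossing argument. -/

open Set InnerProductSpace

theorem HasGradientAt.hasDerivAt_comp {E : Type*} [NormedAddCommGroup E] [InnerProductSpace ℝ E]
    [CompleteSpace E] {f : E → ℝ} {f' : E} {γ : ℝ → E} {v : E} {t : ℝ}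
    (hf : HasGradientAt f f' (γ t)) (hγ : HasDerivAt γ v t) :
    HasDerivAt (f ∘ γ) ⟪f', v⟫_ℝ t := by
  simpa using hf.hasFDerivAt.comp_hasDerivAt t hγ

theorem nonneg_of_hasDerivWithinAt_pos_of_eq_zero {g g' : ℝ → ℝ} {a b : ℝ}
    (hg : ContinuousOn g (Icc a b)) (hg' : ∀ x ∈ Ico a b, HasDerivWithinAt g (g' x) (Ici x) x)
    (ha : 0 ≤ g a) (hpos : ∀ x ∈ Ico a b, g x = 0 → 0 < g' x) :
    ∀ ⦃x⦄, x ∈ Icc a b → 0 ≤ g x := by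
  intro x hx
  simpa using image_le_of_deriv_right_lt_deriv_boundary hg.neg (fun x hx => (hg' x hx).neg)
    (B := 0) (B' := 0) (by simpa using ha) (fun _ => hasDerivAt_const _ _)
    (fun x hx hx0 => by simpa using hpos x hx (neg_eq_zero.mp hx0)) hx

theorem barrier_certificate_general {n : ℕ}
    (e : EuclideanSpace ℝ (Fin n) → EuclideanSpace ℝ (Fin n))
    (f : EuclideanSpace ℝ (Fin n) → ℝ) (P : EuclideanSpace ℝ (Fin n) → Prop)
    (γ : ℝ → EuclideanSpace ℝ (Fin n)) (T : ℝ)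
    (hf : Differentiable ℝ f)
    (hγ : ∀ t ∈ Set.Icc (0:ℝ) T, HasDerivAt γ (e (γ t)) t)
    (hlie : ∀ x, P x → f x = 0 → ⟪gradient f x, e x⟫_ℝ > 0)
    (hP : ∀ t ∈ Set.Icc (0:ℝ) T, P (γ t))
    (h0 : f (γ 0) ≥ 0) :
    ∀ t ∈ Set.Icc (0:ℝ) T, f (γ t) ≥ 0 := by
  intro t ht
  have hlie_deriv : ∀ s ∈ Icc 0 T, HasDerivAt (f ∘ γ) ⟪gradient f (γ s), e (γ s)⟫_ℝ s :=
    fun s hs => (hf (γ s)).hasGradientAt.hasDerivAt_comp (hγ s hs)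
  exact nonneg_of_hasDerivWithinAt_pos_of_eq_zero
    (fun s hs => (hlie_deriv s hs).continuousAt.continuousWithinAt)
    (fun s hs => (hlie_deriv s (Ico_subset_Icc_self hs)).hasDerivWithinAt) h0
    (fun s hs hs0 => hlie _ (hP s (Ico_subset_Icc_self hs)) hs0) ht

/-- Soundness of the barrier certificate rule (bc). -/
theorem barrier_certificate {n : ℕ}
    (e : EuclideanSpace ℝ (Fin n) → EuclideanSpace ℝ (Fin n))
    (f : EuclideanSpace ℝ (Fin n) → ℝ) (P : EuclideanSpace ℝ (Fin n) → Prop)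
    (γ : ℝ → EuclideanSpace ℝ (Fin n)) (T : ℝ) (hT : 0 ≤ T)
    (hf : Differentiable ℝ f)
    (hγ : ∀ t ∈ Set.Icc (0:ℝ) T, HasDerivAt γ (e (γ t)) t)
    (hlie : ∀ x, P x → f x = 0 → ⟪gradient f x, e x⟫_ℝ > 0)
    (hP : ∀ t ∈ Set.Icc (0:ℝ) T, P (γ t))
    (h0 : f (γ 0) ≥ 0) :
    ∀ t ∈ Set.Icc (0:ℝ) T, f (γ t) ≥ 0 :=
  barrier_certificate_general e f P γ T hf hγ hlie hP h0
end

section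
/- (1-dimensional barrier certificate) Let f : ℝ → ℝ and h : [0,T] → ℝ be differentiable, suppose h'(t) > 0 whenever h(t) = 0 and t ∈ [0,T], and h(0) ≥ 0. Then h(t) ≥ 0 for all t ∈ [0,T]. -/
/-- 1-dimensional barrier certificate: a differentiable function that is
nonnegative initially and has strictly positive derivative at every zero
never becomes negative on `[0,T]`. -/
theorem barrier_certificate_1d (h : ℝ → ℝ) (T : ℝ) (hT : 0 ≤ T)
    (hd : Differentiable ℝ h)
    (hpos : ∀ t ∈ Set.Icc (0:ℝ) T, h t = 0 → deriv h t > 0)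
    (h0 : h 0 ≥ 0) :
    ∀ t ∈ Set.Icc (0:ℝ) T, h t ≥ 0 := by
  intro t ht
  by_contra hneg
  push_neg at hneg
  obtain ⟨ht0, htT⟩ := ht
  have hc : Continuous h := hd.continuous
  -- set of zeros in [0, t]
  set Z : Set ℝ := {u | u ∈ Set.Icc (0:ℝ) t ∧ h u = 0} with hZ
  have hZsub : Z ⊆ Set.Icc (0:ℝ) t := fun u hu => hu.1
  -- Z nonempty by IVT
  have hZne : Z.Nonempty := by
    have : (0:ℝ) ∈ Set.Icc (h t) (h 0) := ⟨le_of_lt hneg, h0⟩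
    obtain ⟨u, hu, hu0⟩ := intermediate_value_Icc' ht0 (hc.continuousOn) this
    exact ⟨u, hu, hu0⟩
  have hZclosed : IsClosed Z := by
    have : Z = Set.Icc (0:ℝ) t ∩ h ⁻¹' {0} := by
      ext u; simp [hZ, Set.mem_inter_iff, and_comm]
    rw [this]
    exact isClosed_Icc.inter (isClosed_singleton.preimage hc)
  have hZbdd : BddAbove Z := (isCompact_Icc.bddAbove).mono hZsub
  set s := sSup Z with hs
  have hsZ : s ∈ Z := (isCompact_Icc.of_isClosed_subset hZclosed hZsub).sSup_mem hZne
  have hs0 : h s = 0 := hsZ.2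
  have hst : s ≤ t := hsZ.1.2
  have hslt : s < t := lt_of_le_of_ne hst (fun hst' => absurd (hst' ▸ hs0) (ne_of_lt hneg))
  have hsIcc : s ∈ Set.Icc (0:ℝ) T := ⟨hsZ.1.1, le_trans hst htT⟩
  have hder : deriv h s > 0 := hpos s hsIcc hs0
  -- slope tends to deriv h s > 0 along 𝓝[>] s
  have hda : HasDerivAt h (deriv h s) s := (hd s).hasDerivAt
  have hslope : Filter.Tendsto (slope h s) (nhdsWithin s (Set.Ioi s)) (nhds (deriv h s)) :=
    (hasDerivAt_iff_tendsto_slope.mp hda).mono_left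
      (nhdsWithin_mono s (fun u hu => ne_of_gt hu))
  have hev : ∀ᶠ u in nhdsWithin s (Set.Ioi s), slope h s u > 0 :=
    hslope.eventually (eventually_gt_nhds hder)
  have hev2 : ∀ᶠ u in nhdsWithin s (Set.Ioi s), u < t :=
    eventually_nhdsWithin_of_eventually_nhds (eventually_lt_nhds hslt)
  have : (nhdsWithin s (Set.Ioi s)).NeBot := nhdsGT_neBot s
  obtain ⟨u, ⟨huslope, hut⟩, hu2⟩ := ((hev.and hev2).and self_mem_nhdsWithin).exists
  have hsu : s < u := hu2
  have hupos : h u > 0 := by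
    have : slope h s u = (h u - h s) / (u - s) := slope_def_field h s u
    rw [this, hs0, sub_zero] at huslope
    have := mul_pos huslope (sub_pos.mpr hsu)
    rwa [div_mul_cancel₀ _ (ne_of_gt (sub_pos.mpr hsu))] at this
  -- IVT on [u, t] gives a zero beyond s, contradicting sSup
  have : (0:ℝ) ∈ Set.Icc (h t) (h u) := ⟨le_of_lt hneg, le_of_lt hupos⟩
  obtain ⟨z, hz, hz0⟩ := intermediate_value_Icc' (le_of_lt hut) (hc.continuousOn) this
  have hzZ : z ∈ Z := ⟨⟨le_trans (le_trans hsZ.1.1 (le_of_lt hsu)) hz.1, hz.2⟩, hz0⟩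
  have : z ≤ s := le_csSup hZbdd hzZ
  exact absurd (lt_of_lt_of_le hsu (hz.1)) (not_lt.mpr this)
end

section
/- (Soundness of the solution rule, 1D version) Let u : ℝ × ℝⁿ → ℝⁿ be the flow of ẋ = e, i.e., u(0,x) = x and ∂u/∂t(t,x) = e(u(t,x)); assume solutions are unique. Let D, Q : ℝⁿ → Prop. Suppose the starting state x₀ satisfies: (D x₀ → ∀ t > 0, ((∀ τ, 0 ≤ τ < t → D(u(τ,x₀))) ∧ ¬D(u(t,x₀))) → Q(u(t,x₀))) and (¬D x₀ → Q x₀). Then: if ¬D x₀, Q x₀ holds; and if D x₀ and γ : [0,T] → ℝⁿ is a differentiable solution of ẋ = e with γ(0) = x₀, γ(t) ∈ D for t ∈ [0,T), γ(T) ∉ D, and T > 0, then Q(γ(T)). -/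
/-- Soundness of the solution rule (sln) for the HCSP ODE command. -/
theorem sln {n : ℕ}
    (e : EuclideanSpace ℝ (Fin n) → EuclideanSpace ℝ (Fin n))
    (u : ℝ × EuclideanSpace ℝ (Fin n) → EuclideanSpace ℝ (Fin n))
    (hu0 : ∀ x, u (0, x) = x)
    (hut : ∀ (t : ℝ) (x : EuclideanSpace ℝ (Fin n)),
      HasDerivAt (fun s => u (s, x)) (e (u (t, x))) t)
    (huniq : ∀ (x₀ : EuclideanSpace ℝ (Fin n)) (T : ℝ)
      (γ : ℝ → EuclideanSpace ℝ (Fin n)), 0 ≤ T →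
      (∀ t ∈ Set.Icc (0:ℝ) T, HasDerivAt γ (e (γ t)) t) →
      γ 0 = x₀ → ∀ τ ∈ Set.Icc (0:ℝ) T, γ τ = u (τ, x₀))
    (D Q : EuclideanSpace ℝ (Fin n) → Prop)
    (x₀ : EuclideanSpace ℝ (Fin n))
    (hpre₁ : D x₀ → ∀ t > (0:ℝ),
      ((∀ τ, 0 ≤ τ → τ < t → D (u (τ, x₀))) ∧ ¬ D (u (t, x₀))) → Q (u (t, x₀)))
    (hpre₂ : ¬ D x₀ → Q x₀) :
    (¬ D x₀ → Q x₀) ∧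
    (D x₀ → ∀ (T : ℝ), 0 < T → ∀ γ : ℝ → EuclideanSpace ℝ (Fin n),
      (∀ t ∈ Set.Icc (0:ℝ) T, HasDerivAt γ (e (γ t)) t) →
      γ 0 = x₀ → (∀ t ∈ Set.Ico (0:ℝ) T, D (γ t)) → ¬ D (γ T) →
      Q (γ T)) := by
  refine ⟨hpre₂, fun hD T hT γ hγ' hγ0 hDico hDT => ?_⟩
  have key : ∀ τ ∈ Set.Icc (0:ℝ) T, γ τ = u (τ, x₀) :=
    huniq x₀ T γ hT.le hγ' hγ0
  have hγT : γ T = u (T, x₀) := key T ⟨hT.le, le_refl T⟩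
  rw [hγT]
  refine hpre₁ hD T hT ⟨fun τ h0 hτ => ?_, hγT ▸ hDT⟩
  rw [← key τ ⟨h0, le_of_lt (hτ.trans_le (le_refl T))⟩]
  exact hDico τ ⟨h0, hτ⟩
end

section
/- (Differential ghost, analytic core) Let γ : [0,T] → ℝⁿ be a differentiable solution of ẋ = e(x), and let f : ℝⁿ × ℝᵐ → ℝᵐ be such that y ↦ f(x,y) is globally Lipschitz (uniformly in x along γ) and (t,y) ↦ f(γ(t),y) is continuous. Then for any initial value r ∈ ℝᵐ there exists a differentiable ψ : [0,T] → ℝᵐ with ψ(0) = r and ψ'(t) = f(γ(t), ψ(t)) for all t ∈ [0,T], so that (γ, ψ) is a solution of the augmented system ẋ = e(x), ẏ = f(x,y) on [0,T] with the same duration T. -/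
/-!
The `n`-th iterate of the Picard operator on `C([a, b], E)` is Lipschitz with constant
`(K (b - a))ⁿ / n!` when the field is `K`-Lipschitz in space, so some iterate is a contraction,
however large `K (b - a)` is. Its fixed point solves the ODE on all of `[a, b]`; the ghost equation
is the field `v t y = f (γ t, y)`, with `γ` frozen outside `[0, T]`.
-/

open Set Function MeasureTheory
open scoped Nat NNReal

namespace ODE

variable {E : Type*} [NormedAddCommGroup E] [NormedSpace ℝ E]
  {v : ℝ → E → E} {K : ℝ≥0} {t₀ : ℝ} {x₀ : E}

lemma continuous_picard (hv : Continuous (uncurry v)) {α : ℝ → E} (hα : Continuous α) :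
    Continuous (picard v t₀ x₀ α) :=
  continuous_const.add <| intervalIntegral.continuous_primitive
    (fun _ _ ↦ (hv.comp (continuous_id.prodMk hα)).intervalIntegrable _ _) t₀

lemma dist_picard_le_of_forall_dist_le (hlip : ∀ t, LipschitzWith K (v t))
    (hv : Continuous (uncurry v)) {α β : ℝ → E} (hα : Continuous α) (hβ : Continuous β)
    {t C : ℝ} (n : ℕ) (h : ∀ τ ∈ uIcc t₀ t, dist (α τ) (β τ) ≤ (K * |τ - t₀|) ^ n / n ! * C) :
    dist (picard v t₀ x₀ α t) (picard v t₀ x₀ β t) ≤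
      (K * |t - t₀|) ^ (n + 1) / (n + 1)! * C := by
  have hint : ∀ γ : ℝ → E, Continuous γ → IntervalIntegrable (fun τ ↦ v τ (γ τ)) volume t₀ t :=
    fun γ hγ ↦ (hv.comp (continuous_id.prodMk hγ)).intervalIntegrable _ _
  rw [dist_eq_norm, picard_apply, picard_apply, add_sub_add_left_eq_sub,
    ← intervalIntegral.integral_sub (hint α hα) (hint β hβ),
    intervalIntegral.norm_integral_eq_norm_integral_uIoc]
  calc
    _ ≤ ∫ τ in uIoc t₀ t, (K : ℝ) * ((K * |τ - t₀|) ^ n / n ! * C) := by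
      refine norm_integral_le_of_norm_le (Continuous.integrableOn_uIoc (by fun_prop)) ?_
      refine (ae_restrict_mem measurableSet_Ioc).mono fun τ hτ ↦ ?_
      rw [← dist_eq_norm]
      exact ((hlip τ).dist_le_mul _ _).trans <|
        mul_le_mul_of_nonneg_left (h τ (uIoc_subset_uIcc hτ)) K.coe_nonneg
    _ = (K * |t - t₀|) ^ (n + 1) / (n + 1)! * C := by
      simp_rw [mul_pow, div_eq_mul_inv, mul_assoc, integral_const_mul, integral_mul_const,
        integral_pow_abs_sub_uIoc, div_eq_mul_inv, pow_succ' (K : ℝ), Nat.factorial_succ,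
        Nat.cast_mul, Nat.cast_succ, mul_inv, mul_assoc]

variable {a b : ℝ} (hab : a ≤ b)

noncomputable def picardIcc (hv : Continuous (uncurry v)) (t₀ : ℝ) (x₀ : E)
    (α : C(Icc a b, E)) : C(Icc a b, E) :=
  ContinuousMap.restrict (Icc a b)
    ⟨picard v t₀ x₀ (α.IccExtend hab), continuous_picard hv (α.IccExtend hab).continuous⟩

lemma picardIcc_apply (hv : Continuous (uncurry v)) (α : C(Icc a b, E)) (t : Icc a b) :
    picardIcc hab hv t₀ x₀ α t = picard v t₀ x₀ (α.IccExtend hab) t :=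
  rfl

lemma dist_picardIcc_iterate_apply_le (hlip : ∀ t, LipschitzWith K (v t))
    (hv : Continuous (uncurry v)) (ht₀ : t₀ ∈ Icc a b) (α β : C(Icc a b, E)) (n : ℕ)
    (t : Icc a b) :
    dist ((picardIcc hab hv t₀ x₀)^[n] α t) ((picardIcc hab hv t₀ x₀)^[n] β t) ≤
      (K * |(t : ℝ) - t₀|) ^ n / n ! * dist α β := by
  induction n generalizing t with
  | zero => simpa using ContinuousMap.dist_apply_le_dist t
  | succ n ih =>
    rw [iterate_succ_apply', iterate_succ_apply', picardIcc_apply, picardIcc_apply]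
    refine dist_picard_le_of_forall_dist_le hlip hv (ContinuousMap.continuous _)
      (ContinuousMap.continuous _) n fun τ hτ ↦ ?_
    have hτ' : τ ∈ Icc a b := uIcc_subset_Icc ht₀ t.2 hτ
    simpa [IccExtend_of_mem hab _ hτ'] using ih ⟨τ, hτ'⟩

lemma exists_contractingWith_iterate_picardIcc (hlip : ∀ t, LipschitzWith K (v t))
    (hv : Continuous (uncurry v)) (ht₀ : t₀ ∈ Icc a b) :
    ∃ (n : ℕ) (C : ℝ≥0), ContractingWith C (picardIcc hab hv t₀ x₀)^[n] := by
  obtain ⟨n, hn⟩ := (FloorSemiring.tendsto_pow_div_factorial_atTop (K * (b - a))).eventually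
    (gt_mem_nhds zero_lt_one) |>.exists
  have hC : (0 : ℝ) ≤ (K * (b - a)) ^ n / n ! := by
    have : 0 ≤ b - a := sub_nonneg.mpr hab
    positivity
  refine ⟨n, (⟨_, hC⟩ : ℝ≥0), hn, LipschitzWith.of_dist_le_mul fun α β ↦ ?_⟩
  refine (ContinuousMap.dist_le (by positivity)).mpr fun t ↦
    (dist_picardIcc_iterate_apply_le hab hlip hv ht₀ α β n t).trans ?_
  have : |(t : ℝ) - t₀| ≤ b - a :=
    abs_sub_le_iff.mpr ⟨by linarith [t.2.2, ht₀.1], by linarith [t.2.1, ht₀.2]⟩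
  change _ ≤ (K * (b - a)) ^ n / n ! * dist α β
  gcongr

end ODE

open ODE in
theorem exists_forall_mem_Icc_hasDerivWithinAt_of_lipschitzWith {E : Type*}
    [NormedAddCommGroup E] [NormedSpace ℝ E] [CompleteSpace E] {v : ℝ → E → E} {K : ℝ≥0}
    {a b t₀ : ℝ} (hab : a ≤ b) (hlip : ∀ t, LipschitzWith K (v t))
    (hv : Continuous (uncurry v)) (ht₀ : t₀ ∈ Icc a b) (x₀ : E) :
    ∃ α : ℝ → E, α t₀ = x₀ ∧ ∀ t ∈ Icc a b, HasDerivWithinAt α (v t (α t)) (Icc a b) t := by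
  obtain ⟨n, C, hC⟩ := exists_contractingWith_iterate_picardIcc hab hlip hv ht₀ (x₀ := x₀)
  obtain ⟨α, hα⟩ : ∃ α, IsFixedPt (picardIcc hab hv t₀ x₀) α :=
    ⟨_, hC.isFixedPt_fixedPoint_iterate⟩
  refine ⟨picard v t₀ x₀ (α.IccExtend hab), picard_apply₀, fun t ht ↦ ?_⟩
  have hsol : picard v t₀ x₀ (α.IccExtend hab) t = α.IccExtend hab t := by
    have hαt := congrArg (· ⟨t, ht⟩) hα
    rw [picardIcc_apply] at hαt
    simpa [IccExtend_of_mem hab _ ht] using hαt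
  rw [hsol]
  exact hasDerivWithinAt_picard_Icc ht₀ hv.continuousOn (α.IccExtend hab).continuous.continuousOn
    (fun _ _ ↦ mem_univ _) x₀ ht

theorem dG_exists_general {n m : ℕ}
    (γ : ℝ → EuclideanSpace ℝ (Fin n)) (T : ℝ) (hT : 0 ≤ T)
    (f : EuclideanSpace ℝ (Fin n) × EuclideanSpace ℝ (Fin m) →
      EuclideanSpace ℝ (Fin m))
    (K : NNReal)
    (hlip : ∀ t ∈ Set.Icc (0:ℝ) T, LipschitzWith K (fun y => f (γ t, y)))
    (hcont : Continuous (fun p : ℝ × EuclideanSpace ℝ (Fin m) => f (γ p.1, p.2))) :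
    ∀ r : EuclideanSpace ℝ (Fin m), ∃ ψ : ℝ → EuclideanSpace ℝ (Fin m),
      ψ 0 = r ∧ ∀ t ∈ Set.Icc (0:ℝ) T, HasDerivAt ψ (f (γ t, ψ t)) t := by
  intro r
  set v : ℝ → EuclideanSpace ℝ (Fin m) → EuclideanSpace ℝ (Fin m) :=
    fun t y ↦ f (γ (projIcc 0 T hT t), y) with hv_def
  have hv : Continuous (uncurry v) :=
    hcont.comp (f := fun p : ℝ × EuclideanSpace ℝ (Fin m) ↦ ((projIcc 0 T hT p.1 : ℝ), p.2))
      (by fun_prop)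
  -- solving on `[-1, T + 1]` makes the derivatives at the endpoints of `[0, T]` two-sided
  obtain ⟨ψ, hψ₀, hψ⟩ := exists_forall_mem_Icc_hasDerivWithinAt_of_lipschitzWith
    (a := -1) (b := T + 1) (t₀ := 0) (by linarith) (fun t ↦ hlip _ (projIcc 0 T hT t).2) hv
    ⟨by linarith, by linarith⟩ r
  refine ⟨ψ, hψ₀, fun t ht ↦ ?_⟩
  have hψt := (hψ t ⟨by linarith [ht.1], by linarith [ht.2]⟩).hasDerivAt
    (Icc_mem_nhds (by linarith [ht.1]) (by linarith [ht.2]))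
  simpa [hv_def, projIcc_of_mem hT ht] using hψt

/-- Analytic core of the differential ghost rule (dG): a globally Lipschitz
ghost ODE admits a solution on the whole interval `[0,T]` where the original
solution `γ` exists. -/
theorem dG_exists {n m : ℕ}
    (e : EuclideanSpace ℝ (Fin n) → EuclideanSpace ℝ (Fin n))
    (γ : ℝ → EuclideanSpace ℝ (Fin n)) (T : ℝ) (hT : 0 ≤ T)
    (hγ : ∀ t ∈ Set.Icc (0:ℝ) T, HasDerivAt γ (e (γ t)) t)
    (f : EuclideanSpace ℝ (Fin n) × EuclideanSpace ℝ (Fin m) →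
      EuclideanSpace ℝ (Fin m))
    (K : NNReal)
    (hlip : ∀ t ∈ Set.Icc (0:ℝ) T, LipschitzWith K (fun y => f (γ t, y)))
    (hcont : Continuous (fun p : ℝ × EuclideanSpace ℝ (Fin m) => f (γ p.1, p.2))) :
    ∀ r : EuclideanSpace ℝ (Fin m), ∃ ψ : ℝ → EuclideanSpace ℝ (Fin m),
      ψ 0 = r ∧ ∀ t ∈ Set.Icc (0:ℝ) T, HasDerivAt ψ (f (γ t, ψ t)) t :=
  dG_exists_general γ T hT f K hlip hcont
end

section
/- (Cruise control invariant is a differential invariant) Let I, v : [0,T] → ℝ be differentiable with I'(s) = (15 − v(s))·40 and v'(s) = ((15 − v(s))·600 + I(s) − v(s)·50)·0.001 for all s ∈ [0,T]. Define V(s) = 1.3·(I(s) − 750)² − 198·(I(s) − 750)·(v(s) − 15) + 12192·(v(s) − 15)². If V(0) ≤ 5542 then V(s) ≤ 5542 for all s ∈ [0,T]. -/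
/-!
In the shifted coordinates `u = I - 750`, `w = v - 15` the system is linear,
`u' = -40 w`, `w' = (u - 650 w) / 1000`, and the derivative of
`V = 1.3 u² - 198 u w + 12192 w²` along it is the negative definite form
`-0.198 u² + 49.084 u w - 7929.6 w²`. Hence `V` is antitone on `[0, T]`.
-/

open Set

theorem antitoneOn_of_hasDerivAt_nonpos {D : Set ℝ} (hD : Convex ℝ D) {f f' : ℝ → ℝ}
    (hf : ∀ x ∈ D, HasDerivAt f (f' x) x) (hf' : ∀ x ∈ D, f' x ≤ 0) : AntitoneOn f D :=
  antitoneOn_of_hasDerivWithinAt_nonpos hD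
    (fun x hx => (hf x hx).continuousAt.continuousWithinAt)
    (fun x hx => (hf x (interior_subset hx)).hasDerivWithinAt)
    (fun x hx => hf' x (interior_subset hx))

theorem HasDerivAt.binaryQuadratic {x y : ℝ → ℝ} {x' y' t : ℝ} (a b c : ℝ)
    (hx : HasDerivAt x x' t) (hy : HasDerivAt y y' t) :
    HasDerivAt (fun s => a * x s ^ 2 + b * x s * y s + c * y s ^ 2)
      (a * (2 * x t * x') + b * (x' * y t + x t * y') + c * (2 * y t * y')) t := by
  have h := (((hx.pow 2).const_mul a).add ((hx.const_mul b).mul hy)).add ((hy.pow 2).const_mul c)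
  exact h.congr_deriv (by push_cast; ring)

theorem cruise_lieDeriv_nonpos (u w : ℝ) :
    1.3 * (2 * u * (-40 * w)) + (-198) * ((-40 * w) * w + u * ((u - 650 * w) / 1000))
      + 12192 * (2 * w * ((u - 650 * w) / 1000)) ≤ 0 := by
  nlinarith [sq_nonneg (u - 124 * w), sq_nonneg w]

/-- The quadratic invariant of the PI cruise-control system is a differential
invariant: it is preserved along solutions of the dynamics. -/
theorem cruise_invariant (T : ℝ) (hT : 0 ≤ T) (I v : ℝ → ℝ)
    (hI : ∀ s ∈ Set.Icc (0:ℝ) T, HasDerivAt I ((15 - v s) * 40) s)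
    (hv : ∀ s ∈ Set.Icc (0:ℝ) T,
      HasDerivAt v (((15 - v s) * 600 + I s - v s * 50) * 0.001) s)
    (V : ℝ → ℝ)
    (hV : ∀ s, V s = 1.3 * (I s - 750)^2 - 198 * (I s - 750) * (v s - 15)
      + 12192 * (v s - 15)^2)
    (h0 : V 0 ≤ 5542) :
    ∀ s ∈ Set.Icc (0:ℝ) T, V s ≤ 5542 := by
  have hV_shifted : V = fun s => 1.3 * (I s - 750) ^ 2 + (-198) * (I s - 750) * (v s - 15)
      + 12192 * (v s - 15) ^ 2 := funext fun s => by rw [hV]; ring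
  have hu : ∀ s ∈ Icc 0 T, HasDerivAt (fun s => I s - 750) (-40 * (v s - 15)) s :=
    fun s hs => ((hI s hs).sub_const 750).congr_deriv (by ring)
  have hw : ∀ s ∈ Icc 0 T,
      HasDerivAt (fun s => v s - 15) (((I s - 750) - 650 * (v s - 15)) / 1000) s :=
    fun s hs => ((hv s hs).sub_const 15).congr_deriv (by ring)
  have hanti : AntitoneOn V (Icc 0 T) := by
    rw [hV_shifted]
    exact antitoneOn_of_hasDerivAt_nonpos (convex_Icc 0 T)
      (fun s hs => (hu s hs).binaryQuadratic 1.3 (-198) 12192 (hw s hs))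
      (fun s _ => cruise_lieDeriv_nonpos _ _)
  intro s hs
  exact (hanti (left_mem_Icc.2 hT) hs hs.1).trans h0
end
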